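/- Let a* = (m−a1, m−a2, m−a3, m−a4) be the dual type (also a type in the mixed case). Let k be an algebraically closed field of characteristic p. For every λ ∈ k with λ ≠ 0 and λ ≠ 1, one has Φ_a(λ) = 0 if and only if Φ_{a*}(λ) = 0. -/

import Mathlib

/-!
Write `n₁ = α a₂*`, `n₂ = α a₄*`, `N = α a₃`. Up to sign, `Φ_a` is the coefficient of `Y^N` in
`H = (1 + Y)^n₁ (1 + λY)^n₂`, and `Φ_{a*}` is the coefficient of `Y^(p-1-N)` in
`H* = (1 + Y)^(p-1-n₁) (1 + λY)^(p-1-n₂)`. The coefficients `c_t` of `H` obey the three-term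
recurrence coming from `(1 + Y)(1 + λY) H' = (n₁(1 + λY) + n₂ λ(1 + Y)) H`. Over `𝔽_p`, where
`p - 1 - n = -(n + 1)`, the coefficients of `H*` read backwards from `Y^(p-1)` and weighted by
`(-1)^t C(n₁+n₂, t) λ^t` satisfy the same recurrence, so when `n₁ + n₂ < p` uniqueness of its
solutions gives the Euler-type transformation
`(-1)^t C(n₁+n₂, t) λ^t c*_(p-1-t) = (-1)^n₁ C(n₁+n₂, n₁) λ^n₁ (1 - λ)^(p-1-n₁-n₂) c_t`,
the initial value `c*_(p-1)` being computed from `C(p-1-n, s) ≡ (-1)^s C(n+s, s)`. For `λ ≠ 0, 1` the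
scalar factors do not vanish, and since `(n₁ + n₂) + (n₁* + n₂*) = 2(p - 1)`, the identity applies
to `a` or to `a*`.
-/

open Polynomial

/-- The `a`-Hasse invariant `Φ_a ∈ 𝔽_p[λ]` of a type `a = (a1, a2, a3, a4)` in the mixed case:
`Φ_a(λ) = (-1)^(α a3) ∑_{i+j = α a3} C(α a2*, i) C(α a4*, j) λ^j` where `α = (p-1)/m` and
`a_i* = m - a_i`. -/
noncomputable def HasseInv (p m a2 a3 a4 : ℕ) : Polynomial (ZMod p) :=
  let α := (p - 1) / m
  C ((-1 : ZMod p) ^ (α * a3)) *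
    ∑ j ∈ Finset.range (α * a3 + 1),
      C ((Nat.choose (α * (m - a2)) (α * a3 - j) * Nat.choose (α * (m - a4)) j : ℕ) : ZMod p) *
        X ^ j

open Finset
open scoped Nat

theorem natCast_sub_one_sub {R : Type*} [Ring R] {p : ℕ} [CharP R p] {n : ℕ} (hn : n < p) :
    ((p - 1 - n : ℕ) : R) = -(n + 1) := by
  rw [eq_neg_iff_add_eq_zero, ← Nat.cast_succ, ← Nat.cast_add,
    show p - 1 - n + (n + 1) = p by omega, CharP.cast_eq_zero]

theorem cast_choose_succ_mul {R : Type*} [CommRing R] {n k : ℕ} (hk : k ≤ n) :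
    (n.choose (k + 1) : R) * (k + 1) = n.choose k * (n - k) := by
  have h := congrArg (Nat.cast : ℕ → R) (Nat.choose_succ_right_eq n k)
  push_cast [Nat.cast_sub hk] at h
  exact h

section ZModChoose

variable {p : ℕ} [Fact p.Prime]

theorem ZMod.cast_descFactorial_sub_one_sub {n : ℕ} (hn : n < p) (s : ℕ) :
    ((p - 1 - n).descFactorial s : ZMod p) = (-1) ^ s * (n + 1).ascFactorial s := by
  rw [← descPochhammer_eval_eq_descFactorial, natCast_sub_one_sub hn,
    ← ascPochhammer_nat_eq_natCast_ascFactorial, Nat.cast_succ, ← neg_neg ((n : ZMod p) + 1),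
    ascPochhammer_eval_neg_eq_descPochhammer, neg_neg, ← mul_assoc, ← mul_pow]
  simp

theorem ZMod.cast_choose_sub_one_sub {n s : ℕ} (hn : n < p) (hs : s < p) :
    ((p - 1 - n).choose s : ZMod p) = (-1) ^ s * (n + s).choose s := by
  have hfac : (s ! : ZMod p) ≠ 0 := by
    rw [Ne, ZMod.natCast_eq_zero_iff, (Fact.out : p.Prime).dvd_factorial]
    omega
  apply mul_left_cancel₀ hfac
  have h := ZMod.cast_descFactorial_sub_one_sub hn s
  rw [Nat.descFactorial_eq_factorial_mul_choose, Nat.ascFactorial_eq_factorial_mul_choose] at h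
  push_cast at h
  linear_combination h

theorem ZMod.natCast_choose_ne_zero {n t : ℕ} (hn : n < p) (ht : t ≤ n) :
    (n.choose t : ZMod p) ≠ 0 := by
  rw [Ne, ZMod.natCast_eq_zero_iff]
  intro h
  have := (Fact.out : p.Prime).dvd_factorial.mp
    (h.trans ((Nat.dvd_mul_right _ _).trans (Dvd.intro _ (Nat.choose_mul_factorial_mul_factorial ht))))
  omega

theorem ZMod.cast_choose_mul_choose_sub_one_sub {n1 n2 i : ℕ} (hS : n1 + n2 < p)
    (hi : n1 + i < p) :
    ((p - 1 - n1).choose (p - 1 - (n1 + i)) * (p - 1 - n2).choose (n1 + i) : ZMod p)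
      = (-1) ^ (n1 + i) * (n1 + n2).choose n1 * (p - 1 - (n1 + n2)).choose i := by
  have hsymm : (p - 1 - n1).choose (p - 1 - (n1 + i)) = (p - 1 - n1).choose i :=
    Nat.choose_symm_of_eq_add (by omega)
  have hmul := Nat.choose_mul (n := n2 + (n1 + i)) (k := n1 + i) (s := i) (by omega)
  rw [show n2 + (n1 + i) - i = n1 + n2 by omega, show n1 + i - i = n1 by omega,
    show n2 + (n1 + i) = n1 + n2 + i by omega] at hmul
  rw [hsymm, ZMod.cast_choose_sub_one_sub (by omega) (by omega),
    ZMod.cast_choose_sub_one_sub (by omega) hi, ZMod.cast_choose_sub_one_sub hS (by omega),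
    show n2 + (n1 + i) = n1 + n2 + i by omega]
  have hmul' := congrArg (Nat.cast : ℕ → ZMod p) hmul
  push_cast at hmul'
  linear_combination (-1) ^ n1 * (-1) ^ i * (-1) ^ i * hmul'

end ZModChoose

section Generating

variable {R : Type*} [CommRing R]

theorem coeff_one_add_C_mul_X_pow (r : R) (b j : ℕ) :
    ((1 + C r * X) ^ b).coeff j = r ^ j * b.choose j := by
  rw [add_comm, add_pow]
  simp_rw [one_pow, mul_one, mul_pow, ← C_pow, ← C_eq_natCast,
    mul_right_comm _ (X ^ _), ← C_mul, finsetSum_coeff, coeff_C_mul_X_pow, sum_ite_eq, mem_range]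
  split_ifs with h
  · rfl
  · rw [Nat.choose_eq_zero_of_lt (by omega), Nat.cast_zero, mul_zero]

theorem mul_derivative_pow (q : R[X]) (n : ℕ) :
    q * derivative (q ^ n) = n * derivative q * q ^ n := by
  rcases n with _ | n
  · simp
  · rw [derivative_pow_succ]
    simp only [map_add, map_natCast, map_one]
    push_cast
    ring

theorem coeff_X_mul_derivative (q : R[X]) (n : ℕ) :
    (X * derivative q).coeff n = n * q.coeff n := by
  rcases n with _ | n
  · simp
  · rw [coeff_X_mul, coeff_derivative]
    push_cast
    ring

variable (R) in
/-- `(1 + Y)^a (1 + λY)^b` as a polynomial in `Y = X` over `R[λ]`, with `λ = C X`. -/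
noncomputable def hasseGen (a b : ℕ) : R[X][X] := (1 + X) ^ a * (1 + C X * X) ^ b

theorem coeff_hasseGen (a b t : ℕ) :
    (hasseGen R a b).coeff t
      = ∑ j ∈ range (t + 1), C ((a.choose (t - j) * b.choose j : ℕ) : R) * X ^ j := by
  rw [hasseGen, mul_comm, coeff_mul, Nat.sum_antidiagonal_eq_sum_range_succ_mk]
  refine Finset.sum_congr rfl fun j _ => ?_
  rw [coeff_one_add_C_mul_X_pow, coeff_one_add_X_pow]
  push_cast
  rw [C_mul, C_eq_natCast, C_eq_natCast]
  ring

theorem hasseGen_ode (a b : ℕ) :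
    (1 + X) * (1 + C X * X) * derivative (hasseGen R a b)
      = ((a : R[X][X]) * (1 + C X * X) + (b : R[X][X]) * C X * (1 + X)) * hasseGen R a b := by
  have ha := mul_derivative_pow (1 + X : R[X][X]) a
  have hb := mul_derivative_pow (1 + C X * X : R[X][X]) b
  simp only [derivative_add, derivative_one, derivative_X, derivative_C_mul_X, zero_add] at ha hb
  rw [hasseGen, derivative_mul]
  linear_combination (1 + C X * X) * (1 + C X * X) ^ b * ha + (1 + X) * (1 + X) ^ a * hb

def HasseRec (a b : ℕ) (u : ℕ → R[X]) (t : ℕ) : Prop :=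
  ((t : R[X]) + 2) * u (t + 2)
    = ((a : R[X]) + (b : R[X]) * X - (1 + X) * ((t : R[X]) + 1)) * u (t + 1)
      + X * ((a : R[X]) + (b : R[X]) - (t : R[X])) * u t

theorem hasseRec_coeff_hasseGen (a b t : ℕ) : HasseRec a b (hasseGen R a b).coeff t := by
  set H := hasseGen R a b
  have ode : derivative H + C (1 + X) * (X * derivative H) + C X * (X * (X * derivative H))
      = C ((a : R[X]) + (b : R[X]) * X) * H + C (((a : R[X]) + (b : R[X])) * X) * (X * H) := by
    convert hasseGen_ode (R := R) a b using 1
    · rw [C_add, C_1]; ring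
    · simp only [C_add, C_mul, map_natCast]; ring
  have h := congrArg (coeff · (t + 1)) ode
  simp only [coeff_add, coeff_C_mul, coeff_X_mul, coeff_X_mul_derivative, coeff_derivative] at h
  rw [HasseRec]
  push_cast at h
  linear_combination h

theorem HasseRec.const_mul {a b t : ℕ} {u : ℕ → R[X]} (h : HasseRec a b u t) (K : R[X]) :
    HasseRec a b (K * u ·) t := by
  unfold HasseRec at *
  linear_combination K * h

theorem eqOn_of_hasseRec [IsDomain R] {p : ℕ} [CharP R p] {a b S : ℕ} (hS : S < p)
    {u v : ℕ → R[X]} (hu : ∀ t, t + 2 ≤ S → HasseRec a b u t)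
    (hv : ∀ t, t + 2 ≤ S → HasseRec a b v t) (h0 : u 0 = v 0) (h1 : u 1 = v 1) :
    ∀ t ≤ S, u t = v t := by
  intro t
  induction t using Nat.strong_induction_on with
  | _ t ih =>
    match t with
    | 0 => exact fun _ ↦ h0
    | 1 => exact fun _ ↦ h1
    | s + 2 =>
      intro hs
      have hne : ((s : R[X]) + 2) ≠ 0 := by
        have : ((s + 2 : ℕ) : R[X]) ≠ 0 := by
          rw [Ne, CharP.cast_eq_zero_iff R[X] p]
          exact Nat.not_dvd_of_pos_of_lt (by omega) (by omega)
        exact_mod_cast this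
      apply mul_left_cancel₀ hne
      rw [hu s hs, hv s hs, ih s (by omega) (by omega), ih (s + 1) (by omega) (by omega)]

end Generating

section Reflection

variable {p : ℕ} [Fact p.Prime]

variable (p) in
noncomputable def hasseReflect (n1 n2 t : ℕ) : (ZMod p)[X] :=
  (-1) ^ t * ((n1 + n2).choose t : (ZMod p)[X]) * X ^ t
    * (hasseGen (ZMod p) (p - 1 - n1) (p - 1 - n2)).coeff (p - 1 - t)

theorem hasseReflect_zero {n1 n2 : ℕ} (hS : n1 + n2 < p) :
    hasseReflect p n1 n2 0
      = (-1) ^ n1 * ((n1 + n2).choose n1 : (ZMod p)[X]) * X ^ n1 * (1 - X) ^ (p - 1 - (n1 + n2)) := by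
  simp only [hasseReflect, pow_zero, Nat.choose_zero_right, Nat.cast_one, one_mul, Nat.sub_zero]
  ext j
  rw [coeff_hasseGen, show p - 1 + 1 = p by omega, finsetSum_coeff]
  simp_rw [coeff_C_mul_X_pow, sum_ite_eq, mem_range]
  rw [show (-1) ^ n1 * ((n1 + n2).choose n1 : (ZMod p)[X]) * X ^ n1 * (1 - X) ^ (p - 1 - (n1 + n2))
      = C ((-1) ^ n1 * (n1 + n2).choose n1 : ZMod p)
        * (X ^ n1 * (1 + C (-1) * X) ^ (p - 1 - (n1 + n2))) by
    simp only [map_mul, map_pow, map_neg, map_one, map_natCast]; ring]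
  rw [coeff_C_mul, coeff_X_pow_mul', coeff_one_add_C_mul_X_pow]
  by_cases hj : n1 ≤ j
  · obtain ⟨i, rfl⟩ := Nat.exists_eq_add_of_le hj
    rw [if_pos hj, Nat.add_sub_cancel_left]
    split_ifs with hp
    · rw [Nat.cast_mul, ZMod.cast_choose_mul_choose_sub_one_sub hS hp, pow_add]
      ring
    · rw [Nat.choose_eq_zero_of_lt (by omega : p - 1 - (n1 + n2) < i)]
      simp
  · rw [if_neg hj, Nat.choose_eq_zero_of_lt (by omega : p - 1 - n1 < p - 1 - j)]
    simp

theorem hasseReflect_one {n1 n2 : ℕ} (hS : n1 + n2 < p) :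
    hasseReflect p n1 n2 1
      = ((n1 : (ZMod p)[X]) + (n2 : (ZMod p)[X]) * X) * hasseReflect p n1 n2 0 := by
  have hp := (Fact.out : p.Prime).two_le
  have h := hasseRec_coeff_hasseGen (R := ZMod p) (p - 1 - n1) (p - 1 - n2) (p - 1 - 1)
  rw [HasseRec, natCast_sub_one_sub (by omega), natCast_sub_one_sub (by omega),
    natCast_sub_one_sub (by omega), show p - 1 - 1 + 1 = p - 1 by omega] at h
  simp only [hasseReflect, pow_zero, pow_one, Nat.choose_zero_right, Nat.choose_one_right,
    Nat.sub_zero, Nat.cast_one, one_mul, mul_one]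
  push_cast
  linear_combination -h

theorem hasseRec_hasseReflect {n1 n2 t : ℕ} (hS : n1 + n2 < p) (ht : t + 2 ≤ n1 + n2) :
    HasseRec n1 n2 (hasseReflect p n1 n2) t := by
  set c := (hasseGen (ZMod p) (p - 1 - n1) (p - 1 - n2)).coeff
  have h := hasseRec_coeff_hasseGen (R := ZMod p) (p - 1 - n1) (p - 1 - n2) (p - 1 - (t + 2))
  rw [HasseRec, natCast_sub_one_sub (by omega), natCast_sub_one_sub (by omega),
    natCast_sub_one_sub (by omega), show p - 1 - (t + 2) + 2 = p - 1 - t by omega,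
    show p - 1 - (t + 2) + 1 = p - 1 - (t + 1) by omega] at h
  have hC1 := cast_choose_succ_mul (R := (ZMod p)[X]) (show t + 1 ≤ n1 + n2 by omega)
  have hC2 := cast_choose_succ_mul (R := (ZMod p)[X]) (show t ≤ n1 + n2 by omega)
  simp only [HasseRec, hasseReflect]
  push_cast at h hC1 hC2 ⊢
  linear_combination (-1) ^ t * X ^ (t + 2) * c (p - 1 - (t + 2)) * hC1
    + (-1) ^ t * ((n1 + n2).choose (t + 1) : (ZMod p)[X]) * X ^ (t + 1) * h
    + (-1) ^ t * X ^ (t + 1) * c (p - 1 - t) * hC2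

theorem hasseReflect_eq {n1 n2 t : ℕ} (hS : n1 + n2 < p) (ht : t ≤ n1 + n2) :
    hasseReflect p n1 n2 t
      = (-1) ^ n1 * ((n1 + n2).choose n1 : (ZMod p)[X]) * X ^ n1 * (1 - X) ^ (p - 1 - (n1 + n2))
        * (hasseGen (ZMod p) n1 n2).coeff t := by
  have hc1 : (hasseGen (ZMod p) n1 n2).coeff 1 = (n1 : (ZMod p)[X]) + (n2 : (ZMod p)[X]) * X := by
    simp [coeff_hasseGen, sum_range_succ]
  refine eqOn_of_hasseRec hS (fun s hs ↦ hasseRec_hasseReflect hS hs)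
    (fun s _ ↦ (hasseRec_coeff_hasseGen n1 n2 s).const_mul _) ?_ ?_ t ht
  · simp [hasseReflect_zero hS, coeff_hasseGen]
  · rw [hasseReflect_one hS, hasseReflect_zero hS, hc1, mul_comm]

theorem eval₂_coeff_hasseGen_sub_one_sub_eq_zero_iff {k : Type*} [Field k] (f : ZMod p →+* k)
    {x : k} (hx0 : x ≠ 0) (hx1 : x ≠ 1) {n1 n2 t : ℕ} (hS : n1 + n2 < p) (ht : t ≤ n1 + n2) :
    eval₂ f x ((hasseGen (ZMod p) (p - 1 - n1) (p - 1 - n2)).coeff (p - 1 - t)) = 0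
      ↔ eval₂ f x ((hasseGen (ZMod p) n1 n2).coeff t) = 0 := by
  have h := congrArg (eval₂ f x) (hasseReflect_eq hS ht)
  simp only [hasseReflect, eval₂_mul, eval₂_pow, eval₂_neg, eval₂_one, eval₂_natCast, eval₂_X,
    eval₂_sub] at h
  have hchoose : ∀ s ≤ n1 + n2, ((n1 + n2).choose s : k) ≠ 0 := fun s hs ↦ by
    simpa only [map_natCast, map_zero] using f.injective.ne (ZMod.natCast_choose_ne_zero hS hs)
  have hc₁ : (-1) ^ t * ((n1 + n2).choose t : k) * x ^ t ≠ 0 := by simp [hchoose t ht, hx0]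
  have hc₂ : (-1) ^ n1 * ((n1 + n2).choose n1 : k) * x ^ n1 * (1 - x) ^ (p - 1 - (n1 + n2)) ≠ 0 := by
    simp [hchoose n1 (by omega), hx0, sub_eq_zero, hx1.symm]
  rw [← mul_eq_zero_iff_left hc₁, h, mul_eq_zero_iff_left hc₂]

end Reflection

theorem isRoot_map_hasseInv_iff {k : Type*} [Field k] (p m a2 a3 a4 : ℕ) (f : ZMod p →+* k)
    (x : k) :
    ((HasseInv p m a2 a3 a4).map f).IsRoot x
      ↔ eval₂ f x ((hasseGen (ZMod p) ((p - 1) / m * (m - a2)) ((p - 1) / m * (m - a4))).coeff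
          ((p - 1) / m * a3)) = 0 := by
  rw [IsRoot, eval_map, HasseInv, ← coeff_hasseGen, eval₂_mul, eval₂_C, mul_eq_zero_iff_left]
  simp

theorem stmt10_general (p m a1 a2 a3 a4 : ℕ) [Fact p.Prime]
    (hmd : m ∣ p - 1)
    (h1 : 0 < a1 ∧ a1 < m) (h2 : 0 < a2 ∧ a2 < m) (h3 : 0 < a3 ∧ a3 < m)
    (h4 : 0 < a4 ∧ a4 < m) (hsum : a1 + a2 + a3 + a4 = 2 * m)
    (k : Type*) [Field k] [CharP k p]
    (lam : k) (hne0 : lam ≠ 0) (hne1 : lam ≠ 1) :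
    ((HasseInv p m a2 a3 a4).map (ZMod.castHom dvd_rfl k)).IsRoot lam ↔
      ((HasseInv p m (m - a2) (m - a3) (m - a4)).map (ZMod.castHom dvd_rfl k)).IsRoot lam := by
  rw [isRoot_map_hasseInv_iff, isRoot_map_hasseInv_iff, Nat.sub_sub_self h2.2.le,
    Nat.sub_sub_self h4.2.le]
  set α := (p - 1) / m
  have hαm : α * m = p - 1 := Nat.div_mul_cancel hmd
  have hp := (Fact.out : p.Prime).pos
  have hdual : ∀ a ≤ m, α * a + α * (m - a) = p - 1 := fun a ha ↦ by
    rw [← mul_add, Nat.add_sub_cancel' ha, hαm]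
  have ha1 : α * a1 ≤ p - 1 := hαm ▸ Nat.mul_le_mul_left α h1.2.le
  have htotal : α * a1 + α * a2 + α * a3 + α * a4 = 2 * (p - 1) := by
    rw [← mul_add, ← mul_add, ← mul_add, hsum, mul_left_comm, hαm]
  have hα2 := hdual a2 h2.2.le
  have hα3 := hdual a3 h3.2.le
  have hα4 := hdual a4 h4.2.le
  rcases Nat.lt_or_ge (α * (m - a2) + α * (m - a4)) p with hS | hS
  · rw [show α * a2 = p - 1 - α * (m - a2) by omega, show α * a4 = p - 1 - α * (m - a4) by omega,
      show α * (m - a3) = p - 1 - α * a3 by omega]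
    exact (eval₂_coeff_hasseGen_sub_one_sub_eq_zero_iff _ hne0 hne1 hS (by omega)).symm
  · rw [show α * (m - a2) = p - 1 - α * a2 by omega, show α * (m - a4) = p - 1 - α * a4 by omega,
      show α * a3 = p - 1 - α * (m - a3) by omega]
    exact eval₂_coeff_hasseGen_sub_one_sub_eq_zero_iff _ hne0 hne1 (by omega) (by omega)

/-- for the dual type `a* = (m-a1, m-a2, m-a3, m-a4)` and `λ ∈ k ∖ {0, 1}` in an
algebraically closed field `k` of characteristic `p`: `Φ_a(λ) = 0 ↔ Φ_{a*}(λ) = 0`. -/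
theorem stmt10 (p m a1 a2 a3 a4 : ℕ) (hp : p.Prime) [Fact p.Prime] (hp2 : 2 < p)
    (hm1 : 1 < m) (hmd : m ∣ p - 1)
    (h1 : 0 < a1 ∧ a1 < m) (h2 : 0 < a2 ∧ a2 < m) (h3 : 0 < a3 ∧ a3 < m)
    (h4 : 0 < a4 ∧ a4 < m) (hsum : a1 + a2 + a3 + a4 = 2 * m)
    (k : Type*) [Field k] [IsAlgClosed k] [CharP k p]
    (lam : k) (hne0 : lam ≠ 0) (hne1 : lam ≠ 1) :
    ((HasseInv p m a2 a3 a4).map (ZMod.castHom dvd_rfl k)).IsRoot lam ↔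
      ((HasseInv p m (m - a2) (m - a3) (m - a4)).map (ZMod.castHom dvd_rfl k)).IsRoot lam :=
  stmt10_general p m a1 a2 a3 a4 hmd h1 h2 h3 h4 hsum k lam hne0 hne1
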